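/- arXiv:2212.00278 — 2 statements merged into one kernel-verified Lean document; each statement's English description precedes it below -/
import Mathlib

section
/- Theorem 1 (average coverage of ACP for one-step-ahead prediction errors): Let γ > 0 be a learning rate, δ ∈ (0,1), δ_0 ∈ (0,1) an initial value for the recursion δ_{t+1} = δ_t + γ(δ - e_{t+1}) where e_{t+1} is the indicator that the random nonconformity score R_{t+1} exceeds the prediction region C_{t+1} (e_{t+1} = 0 iff R_{t+1} ≤ C_{t+1}). Assume the almost-sure stepsize bound guaranteeing (-(1-δ_0) - γ)/(Tγ) ≤ (1/T)Σ_{t=0}^{T-1} e_{t+1} - δ ≤ (δ_0 + γ)/(Tγ) holds surely. Then 1 - δ - p₁ ≤ (1/T)Σ_{t=0}^{T-1} P(R_{t+1} ≤ C_{t+1}) ≤ 1 - δ + p₂, where p₁ = (δ_0 + γ)/(Tγ) and p₂ = ((1-δ_0) + γ)/(Tγ); moreover p₁ → 0 and p₂ → 0 as T → ∞. -/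
/-!
Taking expectations in the pathwise sandwich bound on the empirical error rate: the expectation
of the error indicator `e t` is one minus the coverage probability, so the expected average
error is one minus the average coverage, and the two sure bounds pass to the expectation.
Both slack terms are constants divided by `T`.
-/

open MeasureTheory ProbabilityTheory Filter Finset

section Coverage

variable {Ω : Type*} [MeasurableSpace Ω] {μ : Measure Ω} [IsProbabilityMeasure μ]

lemma integral_mem_Icc_of_forall_mem_Icc {f : Ω → ℝ} (hf : Integrable f μ) {a b : ℝ}
    (h : ∀ ω, f ω ∈ Set.Icc a b) : ∫ ω, f ω ∂μ ∈ Set.Icc a b := by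
  constructor
  · simpa using integral_mono (integrable_const a) hf fun ω => (h ω).1
  · simpa using integral_mono hf (integrable_const b) fun ω => (h ω).2

lemma integral_indicator_compl_one {s : Set Ω} (hs : MeasurableSet s) :
    ∫ ω, sᶜ.indicator (1 : Ω → ℝ) ω ∂μ = 1 - μ.real s := by
  rw [integral_indicator_one hs.compl, probReal_compl_eq_one_sub hs]

lemma integral_average_indicator_compl {A : ℕ → Set Ω} (hA : ∀ t, MeasurableSet (A t))
    {T : ℕ} (hT : T ≠ 0) :
    ∫ ω, (1 / (T : ℝ)) * ∑ t ∈ range T, (A t)ᶜ.indicator 1 ω ∂μ =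
      1 - (1 / (T : ℝ)) * ∑ t ∈ range T, μ.real (A t) := by
  have hint : ∀ t, Integrable ((A t)ᶜ.indicator (1 : Ω → ℝ)) μ := fun t =>
    (integrable_const (1 : ℝ)).indicator (hA t).compl
  rw [integral_const_mul, integral_finsetSum _ fun t _ => hint t]
  simp only [integral_indicator_compl_one (hA _), sum_sub_distrib, sum_const, card_range,
    nsmul_eq_mul, mul_one, mul_sub]
  field_simp

end Coverage

lemma tendsto_div_natCast_mul_nhds_zero (a c : ℝ) :
    Tendsto (fun n : ℕ => a / (n * c)) atTop (nhds 0) := by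
  simpa only [div_mul_eq_div_div_swap] using tendsto_const_div_atTop_nhds_zero_nat (a / c)

theorem stmt_5_general
    {Ω : Type*} [MeasureSpace Ω] [IsProbabilityMeasure (ℙ : Measure Ω)]
    (γ δ δ0 : ℝ) (T : ℕ)
    (hT : 1 ≤ T)
    (R C : ℕ → Ω → ℝ) (e : ℕ → Ω → ℝ)
    (hmeas : ∀ t, MeasurableSet {ω | R t ω ≤ C t ω})
    (he : ∀ t ω, e t ω = if R t ω ≤ C t ω then 0 else 1)
    (hsand : ∀ ω,
      (-(1 - δ0) - γ) / (T * γ) ≤ (1 / (T:ℝ)) * (∑ t ∈ Finset.range T, e (t + 1) ω) - δ ∧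
      (1 / (T:ℝ)) * (∑ t ∈ Finset.range T, e (t + 1) ω) - δ ≤ (δ0 + γ) / (T * γ)) :
    (1 - δ - (δ0 + γ) / (T * γ) ≤
        (1 / (T:ℝ)) * ∑ t ∈ Finset.range T, (ℙ {ω | R (t + 1) ω ≤ C (t + 1) ω}).toReal ∧
      (1 / (T:ℝ)) * ∑ t ∈ Finset.range T, (ℙ {ω | R (t + 1) ω ≤ C (t + 1) ω}).toReal ≤
        1 - δ + ((1 - δ0) + γ) / (T * γ)) ∧
    Tendsto (fun T : ℕ => (δ0 + γ) / (T * γ)) atTop (nhds 0) ∧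
    Tendsto (fun T : ℕ => ((1 - δ0) + γ) / (T * γ)) atTop (nhds 0) := by
  set A : ℕ → Set Ω := fun t => {ω | R (t + 1) ω ≤ C (t + 1) ω}
  have he_indicator : ∀ t, e (t + 1) = (A t)ᶜ.indicator 1 := fun t => by
    funext ω
    by_cases h : R (t + 1) ω ≤ C (t + 1) ω <;> simp [he, A, h]
  have hint : Integrable (fun ω => (1 / (T : ℝ)) * ∑ t ∈ range T, e (t + 1) ω) ℙ := by
    simp only [he_indicator]
    exact (integrable_finsetSum _ fun t _ =>
      (integrable_const (1 : ℝ)).indicator (hmeas (t + 1)).compl).const_mul _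
  have hmean : ∫ ω, (1 / (T : ℝ)) * ∑ t ∈ range T, e (t + 1) ω =
      1 - (1 / (T : ℝ)) * ∑ t ∈ range T, (ℙ (A t)).toReal := by
    simp only [he_indicator, ← measureReal_def]
    exact integral_average_indicator_compl (fun t => hmeas (t + 1)) (by omega)
  obtain ⟨hlow, hhigh⟩ := integral_mem_Icc_of_forall_mem_Icc
    (a := δ + (-(1 - δ0) - γ) / (T * γ)) (b := δ + (δ0 + γ) / (T * γ)) hint fun ω =>
    ⟨by linarith [(hsand ω).1], by linarith [(hsand ω).2]⟩
  rw [hmean] at hlow hhigh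
  have hneg : (-(1 - δ0) - γ) / (T * γ) = -(((1 - δ0) + γ) / (T * γ)) := by ring
  exact ⟨⟨by linarith, by linarith⟩, tendsto_div_natCast_mul_nhds_zero _ _,
    tendsto_div_natCast_mul_nhds_zero _ _⟩

/-- Theorem 1: average coverage of ACP for one-step-ahead prediction errors. -/
theorem stmt_5
    {Ω : Type*} [MeasureSpace Ω] [IsProbabilityMeasure (ℙ : Measure Ω)]
    (γ δ δ0 : ℝ) (T : ℕ)
    (hγ : 0 < γ) (hδ : δ ∈ Set.Ioo (0:ℝ) 1) (hδ0 : δ0 ∈ Set.Ioo (0:ℝ) 1) (hT : 1 ≤ T)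
    (R C : ℕ → Ω → ℝ) (e : ℕ → Ω → ℝ)
    (hmeas : ∀ t, MeasurableSet {ω | R t ω ≤ C t ω})
    (he : ∀ t ω, e t ω = if R t ω ≤ C t ω then 0 else 1)
    (hsand : ∀ ω,
      (-(1 - δ0) - γ) / (T * γ) ≤ (1 / (T:ℝ)) * (∑ t ∈ Finset.range T, e (t + 1) ω) - δ ∧
      (1 / (T:ℝ)) * (∑ t ∈ Finset.range T, e (t + 1) ω) - δ ≤ (δ0 + γ) / (T * γ)) :
    (1 - δ - (δ0 + γ) / (T * γ) ≤
        (1 / (T:ℝ)) * ∑ t ∈ Finset.range T, (ℙ {ω | R (t + 1) ω ≤ C (t + 1) ω}).toReal ∧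
      (1 / (T:ℝ)) * ∑ t ∈ Finset.range T, (ℙ {ω | R (t + 1) ω ≤ C (t + 1) ω}).toReal ≤
        1 - δ + ((1 - δ0) + γ) / (T * γ)) ∧
    Tendsto (fun T : ℕ => (δ0 + γ) / (T * γ)) atTop (nhds 0) ∧
    Tendsto (fun T : ℕ => ((1 - δ0) + γ) / (T * γ)) atTop (nhds 0) :=
  stmt_5_general γ δ δ0 T hT R C e hmeas he hsand
end

section
/- Quantile coverage in conformal prediction: Let R_1, …, R_{t+1} be exchangeable real-valued random variables (in particular, i.i.d.), let δ ∈ (0,1), and let q := ⌈(t+1)(1-δ)⌉. If q ≤ t, define C as the q-th smallest value among R_1, …, R_t. Then P(R_{t+1} ≤ C) ≥ 1 - δ. -/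
/-!
Write `strictRank x i` for the number of coordinates of `x` strictly below `x i`. In every
tuple at least `q` coordinates have strict rank `< q` (the `q` smallest ones), so the `t + 1`
events `strictRank R i < q` have indicators summing to at least `q`. By exchangeability they
all have the same probability, hence each has probability at least `q / (t + 1) ≥ 1 - δ`. For
`i` the last index, `strictRank R i < q` says exactly that `R_{t+1}` is at most the `q`-th
smallest of `R_1, …, R_t`.
-/

open MeasureTheory ProbabilityTheory Finset
open scoped ENNReal

theorem List.Pairwise.le_getElem_iff_countP_lt_le {α : Type*} [LinearOrder α] {L : List α}
    (hL : L.Pairwise (· ≤ ·)) (v : α) {i : ℕ} (hi : i < L.length) :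
    v ≤ L[i] ↔ L.countP (· < v) ≤ i := by
  induction L generalizing i with
  | nil => simp at hi
  | cons a L ih =>
    rw [List.pairwise_cons] at hL
    by_cases hav : a < v
    · cases i with
      | zero => simp [hav]
      | succ i => simpa [hav] using ih hL.2 (Nat.lt_of_succ_lt_succ hi)
    · have hva : v ≤ a := not_lt.1 hav
      have hcount : (a :: L).countP (· < v) = 0 :=
        List.countP_eq_zero.2 fun b hb => by
          rcases List.mem_cons.1 hb with rfl | hb
          · simpa using hva
          · simpa using hva.trans (hL.1 b hb)
      simp only [hcount, zero_le, iff_true]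
      cases i with
      | zero => exact hva
      | succ i => exact hva.trans (hL.1 _ (List.getElem_mem _))

theorem Finset.le_card_filter_card_filter_lt_lt {ι α : Type*} [DecidableEq ι] [LinearOrder α]
    (x : ι → α) (s : Finset ι) :
    ∀ q ≤ #s, q ≤ #{i ∈ s | #{j ∈ s | x j < x i} < q} := by
  induction s using Finset.induction_on_max_value x with
  | empty => simp
  | insert a s has hmax ih =>
    intro q hq
    rcases le_or_gt q #s with hqs | hqs
    · refine (ih q hqs).trans (card_le_card fun i hi => ?_)
      simp only [mem_filter] at hi ⊢
      have hbelow : {j ∈ insert a s | x j < x i} = {j ∈ s | x j < x i} := by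
        rw [filter_insert, if_neg (not_lt.2 (hmax i hi.1))]
      exact ⟨mem_insert_of_mem hi.1, hbelow ▸ hi.2⟩
    · obtain rfl : q = #(insert a s) := by rw [card_insert_of_notMem has] at hq ⊢; omega
      have hall : ∀ i ∈ insert a s, #{j ∈ insert a s | x j < x i} < #(insert a s) :=
        fun i hi => card_lt_card (filter_ssubset.2 ⟨i, hi, lt_irrefl _⟩)
      rw [filter_true_of_mem hall]

section StrictRank

variable {ι α : Type*} [Fintype ι] [LinearOrder α]

def strictRank (x : ι → α) (i : ι) : ℕ := #{j | x j < x i}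

theorem strictRank_comp_perm (x : ι → α) (σ : Equiv.Perm ι) (i : ι) :
    strictRank (x ∘ σ) i = strictRank x (σ i) :=
  card_equiv σ (by simp)

theorem le_card_filter_strictRank_lt (x : ι → α) {q : ℕ} (hq : q ≤ Fintype.card ι) :
    q ≤ #{i | strictRank x i < q} := by
  classical
  exact le_card_filter_card_filter_lt_lt x univ q hq

theorem strictRank_last {t : ℕ} (x : Fin (t + 1) → α) :
    strictRank x (Fin.last t) = #{i : Fin t | x i.castSucc < x (Fin.last t)} := by
  rw [strictRank, card_filter, card_filter, Fin.sum_univ_castSucc]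
  simp

theorem le_sort_getD_iff_strictRank_lt {t q : ℕ} (hq : 1 ≤ q) (hqt : q ≤ t)
    (x : Fin (t + 1) → α) (d : α) :
    x (Fin.last t) ≤ (Multiset.sort (Multiset.map (fun i : Fin t => x i.castSucc) univ.val)
      (· ≤ ·)).getD (q - 1) d ↔ strictRank x (Fin.last t) < q := by
  set L := Multiset.sort (Multiset.map (fun i : Fin t => x i.castSucc) univ.val) (· ≤ ·)
  have hlen : q - 1 < L.length := by
    rw [Multiset.length_sort, Multiset.card_map, card_val, card_univ, Fintype.card_fin]
    omega
  have hcount : L.countP (· < x (Fin.last t)) = strictRank x (Fin.last t) := by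
    rw [strictRank_last, ← Multiset.coe_countP, Multiset.sort_eq, Multiset.countP_map]
    rfl
  rw [List.getD_eq_getElem _ _ hlen,
    (Multiset.pairwise_sort _ _).le_getElem_iff_countP_lt_le _ hlen, hcount]
  omega

variable [TopologicalSpace α] [OrderClosedTopology α] [SecondCountableTopology α]
  [MeasurableSpace α] [OpensMeasurableSpace α]

theorem measurable_strictRank (i : ι) : Measurable fun x : ι → α => strictRank x i := by
  simp only [strictRank, card_filter]
  exact Finset.measurable_sum _ fun j _ => Measurable.ite
    (measurableSet_lt (measurable_pi_apply j) (measurable_pi_apply i)) measurable_const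
    measurable_const

theorem le_card_mul_measure_strictRank_lt [DecidableEq ι] {ν : Measure (ι → α)}
    [IsProbabilityMeasure ν] (hν : ∀ σ : Equiv.Perm ι, ν.map (fun x i => x (σ i)) = ν)
    {q : ℕ} (hq : q ≤ Fintype.card ι) (k : ι) :
    q ≤ Fintype.card ι * ν {x | strictRank x k < q} := by
  set S : ι → Set (ι → α) := fun i => {x | strictRank x i < q}
  have hS (i : ι) : MeasurableSet (S i) :=
    measurableSet_lt (measurable_strictRank i) measurable_const
  have hS_eq (i : ι) : ν (S i) = ν (S k) := by
    calc ν (S i) = ν.map (fun x j => x (Equiv.swap k i j)) (S k) := by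
          rw [Measure.map_apply (by fun_prop) (hS k)]
          congr! 1
          ext x
          simp [S, ← Function.comp_def x, strictRank_comp_perm]
      _ = ν (S k) := by rw [hν]
  calc (q : ℝ≥0∞) = ∫⁻ _, (q : ℝ≥0∞) ∂ν := by simp
    _ ≤ ∫⁻ x, ∑ i, (S i).indicator 1 x ∂ν := lintegral_mono fun x => by
          simpa [Set.indicator_apply, S] using le_card_filter_strictRank_lt x hq
    _ = ∑ i, ν (S i) := by
          rw [lintegral_finsetSum _ fun i _ => measurable_one.indicator (hS i)]
          simp_rw [lintegral_indicator_one (hS _)]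
    _ = Fintype.card ι * ν (S k) := by simp [hS_eq]

end StrictRank

theorem stmt_11_general
    {Ω : Type*} [MeasureSpace Ω] [IsProbabilityMeasure (ℙ : Measure Ω)]
    (t : ℕ) (R : Fin (t + 1) → Ω → ℝ)
    (hmeas : ∀ i, Measurable (R i))
    (hexch : ∀ σ : Equiv.Perm (Fin (t + 1)),
      Measure.map (fun ω => fun i => R (σ i) ω) ℙ =
        Measure.map (fun ω => fun i => R i ω) ℙ)
    (δ : ℝ) (hδ : δ ∈ Set.Ioo (0:ℝ) 1)
    (q : ℕ) (hq : q = ⌈((t : ℝ) + 1) * (1 - δ)⌉₊) (hqt : q ≤ t) :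
    1 - δ ≤ (ℙ {ω | R (Fin.last t) ω ≤
      ((Multiset.sort
        (Multiset.map (fun i : Fin t => R i.castSucc ω) Finset.univ.val) (· ≤ ·)).getD (q - 1) 0)}).toReal := by
  have hq_lower : ((t : ℝ) + 1) * (1 - δ) ≤ q := hq ▸ Nat.le_ceil _
  have hq_pos : 1 ≤ q := by
    have : (0 : ℝ) < q := (mul_pos (by positivity) (sub_pos.2 hδ.2)).trans_le hq_lower
    exact_mod_cast this
  set X : Ω → Fin (t + 1) → ℝ := fun ω i => R i ω
  have hX : Measurable X := measurable_pi_lambda _ hmeas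
  have hν (σ : Equiv.Perm (Fin (t + 1))) :
      (Measure.map X ℙ).map (fun x i => x (σ i)) = Measure.map X ℙ := by
    rw [Measure.map_map (by fun_prop) hX]
    exact hexch σ
  have hevent : {ω | R (Fin.last t) ω ≤ ((Multiset.sort (Multiset.map
      (fun i : Fin t => R i.castSucc ω) Finset.univ.val) (· ≤ ·)).getD (q - 1) 0)} =
      X ⁻¹' {x | strictRank x (Fin.last t) < q} := by
    ext ω
    exact le_sort_getD_iff_strictRank_lt hq_pos hqt (X ω) 0
  have : IsProbabilityMeasure (Measure.map X ℙ) :=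
    Measure.isProbabilityMeasure_map hX.aemeasurable
  set p := Measure.map X ℙ {x | strictRank x (Fin.last t) < q}
  have hcover : (q : ℝ) ≤ (t + 1) * p.toReal := by
    have := ENNReal.toReal_mono (by finiteness)
      (le_card_mul_measure_strictRank_lt hν (q := q) (by rw [Fintype.card_fin]; omega) (Fin.last t))
    rwa [ENNReal.toReal_natCast, ENNReal.toReal_mul, ENNReal.toReal_natCast, Fintype.card_fin,
      Nat.cast_succ] at this
  rw [hevent,
    ← Measure.map_apply hX (measurableSet_lt (measurable_strictRank _) measurable_const)]
  exact le_of_mul_le_mul_left (hq_lower.trans hcover) (by positivity)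

/-- Split conformal prediction coverage guarantee for exchangeable scores. -/
theorem stmt_11
    {Ω : Type*} [MeasureSpace Ω] [IsProbabilityMeasure (ℙ : Measure Ω)]
    (t : ℕ) (R : Fin (t + 1) → Ω → ℝ)
    (hmeas : ∀ i, Measurable (R i))
    (hexch : ∀ σ : Equiv.Perm (Fin (t + 1)),
      Measure.map (fun ω => fun i => R (σ i) ω) ℙ =
        Measure.map (fun ω => fun i => R i ω) ℙ)
    (hties : ∀ i j, i ≠ j → ℙ {ω | R i ω = R j ω} = 0)
    (δ : ℝ) (hδ : δ ∈ Set.Ioo (0:ℝ) 1)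
    (q : ℕ) (hq : q = ⌈((t : ℝ) + 1) * (1 - δ)⌉₊) (hqt : q ≤ t) :
    1 - δ ≤ (ℙ {ω | R (Fin.last t) ω ≤
      ((Multiset.sort
        (Multiset.map (fun i : Fin t => R i.castSucc ω) Finset.univ.val) (· ≤ ·)).getD (q - 1) 0)}).toReal :=
  stmt_11_general t R hmeas hexch δ hδ q hq hqt
end
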